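/- arXiv:2201.01959 — 7 statements merged into one kernel-verified Lean document; each statement's English description precedes it below -/
import Mathlib

section
/- Fix an integer z ≥ 2 and a finite set X ⊆ [0,1) of cardinality M. With z-adic intervals I(s₁,…,s_p) as before, define for 0 ≤ h ≤ p: S_h(X;p) = ∑_{s₁,…,s_p ∈ {1,…,z}} ||I(s₁,…,s_p) ∩ X| − |I(s₁,…,s_h) ∩ X|/z^{p−h}|². Then for every 0 ≤ h ≤ p−1, S_h(X;p) − S_{h+1}(X;p) = (1/z^{p−h−1}) ∑_{s₁,…,s_{h+1}} ||I(s₁,…,s_{h+1}) ∩ X| − |I(s₁,…,s_h) ∩ X|/z|², and in particular S_h(X;p) ≥ S_{h+1}(X;p). -/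
open scoped Classical

/-- Number of points of `X` in the generation-`j` z-adic interval indexed by `t`. -/
noncomputable def cntj (X : Finset ℝ) (z j : ℕ) (t : Fin j → Fin z) : ℕ :=
  (X.filter fun x =>
    x ∈ Set.Ico (∑ i : Fin j, ((t i : ℕ) : ℝ) / (z : ℝ) ^ ((i : ℕ) + 1))
      ((∑ i : Fin j, ((t i : ℕ) : ℝ) / (z : ℝ) ^ ((i : ℕ) + 1)) + 1 / (z : ℝ) ^ j)).card

/-- `S_h(X;p)`: squared deviation of generation-`p` counts from the average
predicted by their generation-`h` ancestors (intended for `h ≤ p`). -/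
noncomputable def Sfun (X : Finset ℝ) (z p h : ℕ) : ℝ :=
  ∑ s : Fin p → Fin z,
    |(cntj X z p s : ℝ) -
      (cntj X z (min h p) (fun i => s (Fin.castLE (min_le_right h p) i)) : ℝ) /
        (z : ℝ) ^ (p - h)| ^ 2


lemma ind_split (z : ℕ) (hz : 0 < z) (a c x : ℝ) (hc : 0 < c) :
    (if x ∈ Set.Ico a (a + z * c) then (1:ℕ) else 0) =
      ∑ k : Fin z, if x ∈ Set.Ico (a + k * c) (a + k * c + c) then 1 else 0 := by
  by_cases hx : x ∈ Set.Ico a (a + z * c)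
  · obtain ⟨h1, h2⟩ := hx
    have hd0 : (0:ℝ) ≤ (x - a) / c := div_nonneg (by linarith) hc.le
    set k0 : ℤ := ⌊(x - a) / c⌋ with hk0def
    have hk0 : 0 ≤ k0 := Int.floor_nonneg.2 hd0
    have hk0' : k0 < (z:ℤ) := by
      have : (x - a) / c < (z:ℝ) := (div_lt_iff₀ hc).2 (by linarith)
      exact Int.floor_lt.2 (by exact_mod_cast this)
    have hkz : k0.toNat < z := by omega
    set K : Fin z := ⟨k0.toNat, hkz⟩ with hKdef
    have hKR : ((K : ℕ) : ℝ) = (k0 : ℝ) := by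
      simp only [hKdef]
      exact_mod_cast congrArg Int.cast (Int.toNat_of_nonneg hk0)
    have hmemK : x ∈ Set.Ico (a + K * c) (a + K * c + c) := by
      constructor
      · have : (k0 : ℝ) ≤ (x - a) / c := Int.floor_le _
        have := (le_div_iff₀ hc).1 this
        rw [hKR]; linarith
      · have : (x - a) / c < (k0 : ℝ) + 1 := Int.lt_floor_add_one _
        have := (div_lt_iff₀ hc).1 this
        rw [hKR]; linarith
    rw [if_pos ⟨h1, h2⟩, Finset.sum_eq_single K]
    · rw [if_pos hmemK]
    · intro k _ hk
      rw [if_neg]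
      intro ⟨g1, g2⟩
      apply hk
      have e1 : ((k:ℕ):ℝ) ≤ (x - a) / c := (le_div_iff₀ hc).2 (by linarith)
      have e2 : (x - a) / c < ((k:ℕ):ℝ) + 1 := (div_lt_iff₀ hc).2 (by linarith)
      have : k0 = (k : ℕ) := by
        rw [hk0def, Int.floor_eq_iff]
        constructor
        · exact_mod_cast e1
        · push_cast; exact_mod_cast e2
      apply Fin.ext
      simp [hKdef, this]
    · intro hK; exact absurd (Finset.mem_univ K) hK
  · rw [if_neg hx, eq_comm]
    apply Finset.sum_eq_zero
    intro k _
    rw [if_neg]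
    intro ⟨g1, g2⟩
    apply hx
    have hk1 : (0:ℝ) ≤ (k:ℕ) := by positivity
    have hk2 : ((k:ℕ):ℝ) + 1 ≤ z := by
      have : (k:ℕ) + 1 ≤ z := k.isLt
      exact_mod_cast this
    constructor
    · nlinarith
    · nlinarith

lemma cnt_step (X : Finset ℝ) (z j : ℕ) (hz : 0 < z) (t : Fin j → Fin z) :
    cntj X z j t = ∑ k : Fin z, cntj X z (j + 1) (Fin.snoc t k) := by
  have hzR : (0:ℝ) < z := by exact_mod_cast hz
  have hc : (0:ℝ) < 1 / (z : ℝ) ^ (j + 1) := by positivity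
  set L : ℝ := ∑ i : Fin j, ((t i : ℕ) : ℝ) / (z : ℝ) ^ ((i : ℕ) + 1) with hL
  have hbase : ∀ k : Fin z,
      (∑ i : Fin (j+1), ((Fin.snoc (α := fun _ => Fin z) t k i : ℕ) : ℝ) / (z : ℝ) ^ ((i : ℕ) + 1))
        = L + (k : ℕ) * (1 / (z : ℝ) ^ (j + 1)) := by
    intro k
    rw [Fin.sum_univ_castSucc]
    simp only [Fin.snoc_castSucc, Fin.snoc_last, Fin.coe_castSucc, Fin.val_last]
    rw [hL]
    ring
  have hbig : L + 1 / (z : ℝ) ^ j = L + z * (1 / (z : ℝ) ^ (j + 1)) := by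
    congr 1
    rw [pow_succ]
    field_simp
  unfold cntj
  simp only [hbase]
  rw [Finset.card_filter, ← hL, hbig]
  have : ∀ x ∈ X, (if x ∈ Set.Ico L (L + z * (1 / (z : ℝ) ^ (j + 1))) then (1:ℕ) else 0)
      = ∑ k : Fin z, if x ∈ Set.Ico (L + (k:ℕ) * (1 / (z : ℝ) ^ (j + 1)))
          (L + (k:ℕ) * (1 / (z : ℝ) ^ (j + 1)) + 1 / (z : ℝ) ^ (j + 1)) then 1 else 0 := by
    intro x _
    exact ind_split z hz L (1 / (z : ℝ) ^ (j + 1)) x hc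
  rw [Finset.sum_congr rfl this, Finset.sum_comm]
  apply Finset.sum_congr rfl
  intro k _
  rw [Finset.card_filter]

lemma fiber_split {z p : ℕ} (j : ℕ) (h1 : j ≤ p) (h2 : j + 1 ≤ p) (t : Fin j → Fin z)
    (f : (Fin p → Fin z) → ℕ) :
    ∑ s ∈ Finset.univ.filter (fun s : Fin p → Fin z => ∀ i : Fin j, s (Fin.castLE h1 i) = t i), f s
      = ∑ k : Fin z, ∑ s ∈ Finset.univ.filter
          (fun s : Fin p → Fin z => ∀ i : Fin (j+1), s (Fin.castLE h2 i) = Fin.snoc (α := fun _ => Fin z) t k i), f s := by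
  rw [← Finset.sum_fiberwise_of_maps_to
    (g := fun s : Fin p → Fin z => s (Fin.castLE h2 (Fin.last j)))
    (fun x _ => Finset.mem_univ _) f]
  apply Finset.sum_congr rfl
  intro k _
  rw [Finset.filter_filter]
  apply Finset.sum_congr _ (fun _ _ => rfl)
  apply Finset.filter_congr
  intro s _
  constructor
  · rintro ⟨ha, hb⟩ i
    refine Fin.lastCases ?_ ?_ i
    · rw [Fin.snoc_last]; exact hb
    · intro i'
      rw [Fin.snoc_castSucc]
      exact ha i'
  · intro hall
    constructor
    · intro i
      have := hall i.castSucc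
      rwa [Fin.snoc_castSucc] at this
    · have := hall (Fin.last j)
      rwa [Fin.snoc_last] at this

lemma fiber_sum (X : Finset ℝ) (z p : ℕ) (hz : 0 < z) :
    ∀ (d j : ℕ) (hd : j + d = p) (hjp : j ≤ p) (t : Fin j → Fin z),
    cntj X z j t = ∑ s ∈ Finset.univ.filter
      (fun s : Fin p → Fin z => ∀ i : Fin j, s (Fin.castLE hjp i) = t i), cntj X z p s := by
  intro d
  induction d with
  | zero =>
    intro j hd hjp t
    subst hd
    have : Finset.univ.filter
        (fun s : Fin (j+0) → Fin z => ∀ i : Fin j, s (Fin.castLE hjp i) = t i) = {t} := by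
      apply Finset.eq_singleton_iff_unique_mem.2
      constructor
      · simp only [Finset.mem_filter, Finset.mem_univ, true_and]
        intro i; rfl
      · intro s hs
        simp only [Finset.mem_filter, Finset.mem_univ, true_and] at hs
        funext i
        exact hs i
    rw [this, Finset.sum_singleton]
    rfl
  | succ d ih =>
    intro j hd hjp t
    have h2 : j + 1 ≤ p := by omega
    rw [cnt_step X z j hz t, fiber_split j hjp h2 t (cntj X z p)]
    apply Finset.sum_congr rfl
    intro k _
    exact ih (j+1) (by omega) h2 (Fin.snoc t k)

lemma fiber_card (z p : ℕ) (hz : 0 < z) :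
    ∀ (d j : ℕ) (hd : j + d = p) (hjp : j ≤ p) (t : Fin j → Fin z),
    (Finset.univ.filter
      (fun s : Fin p → Fin z => ∀ i : Fin j, s (Fin.castLE hjp i) = t i)).card = z ^ d := by
  intro d
  induction d with
  | zero =>
    intro j hd hjp t
    subst hd
    have : Finset.univ.filter
        (fun s : Fin (j+0) → Fin z => ∀ i : Fin j, s (Fin.castLE hjp i) = t i) = {t} := by
      apply Finset.eq_singleton_iff_unique_mem.2
      constructor
      · simp only [Finset.mem_filter, Finset.mem_univ, true_and]
        intro i; rfl
      · intro s hs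
        simp only [Finset.mem_filter, Finset.mem_univ, true_and] at hs
        funext i
        exact hs i
    rw [this]
    simp
  | succ d ih =>
    intro j hd hjp t
    have h2 : j + 1 ≤ p := by omega
    rw [Finset.card_eq_sum_ones, fiber_split j hjp h2 t (fun _ => 1)]
    have : ∀ k : Fin z, ∑ s ∈ Finset.univ.filter
        (fun s : Fin p → Fin z => ∀ i : Fin (j+1), s (Fin.castLE h2 i) = Fin.snoc (α := fun _ => Fin z) t k i),
        (1:ℕ) = z ^ d := by
      intro k
      rw [← Finset.card_eq_sum_ones]
      exact ih (j+1) (by omega) h2 (Fin.snoc t k)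
    rw [Finset.sum_congr rfl (fun k _ => this k), Finset.sum_const, Finset.card_univ,
      Fintype.card_fin, smul_eq_mul, pow_succ]
    ring

lemma cnt_castLE_congr (X : Finset ℝ) (z p : ℕ) {j j' : ℕ} (e : j = j')
    (hj : j ≤ p) (hj' : j' ≤ p) (s : Fin p → Fin z) :
    cntj X z j (fun i => s (Fin.castLE hj i)) = cntj X z j' (fun i => s (Fin.castLE hj' i)) := by
  subst e; rfl

theorem stmt4 (z p M h : ℕ) (hz : 2 ≤ z) (hp : 1 ≤ p) (hh : h + 1 ≤ p)
    (X : Finset ℝ) (hX : ∀ x ∈ X, x ∈ Set.Ico (0:ℝ) 1) (hM : X.card = M) :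
    Sfun X z p h - Sfun X z p (h + 1) =
      (1 / (z : ℝ) ^ (p - h - 1)) *
        ∑ t : Fin (h + 1) → Fin z,
          |(cntj X z (h + 1) t : ℝ) -
            (cntj X z h (fun i => t (Fin.castLE (Nat.le_succ h) i)) : ℝ) / (z : ℝ)| ^ 2
      ∧ Sfun X z p (h + 1) ≤ Sfun X z p h := by
  have hzp : 0 < z := by omega
  have hhp : h ≤ p := by omega
  have e1 : p - h = (p - h - 1) + 1 := by omega
  have hzR : (0:ℝ) < z := by exact_mod_cast hzp
  have hNpos : (0:ℝ) < (z:ℝ) ^ (p - h - 1) := by positivity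
  have key : Sfun X z p h - Sfun X z p (h + 1) =
      (1 / (z : ℝ) ^ (p - h - 1)) *
        ∑ t : Fin (h + 1) → Fin z,
          |(cntj X z (h + 1) t : ℝ) -
            (cntj X z h (fun i => t (Fin.castLE (Nat.le_succ h) i)) : ℝ) / (z : ℝ)| ^ 2 := by
    unfold Sfun
    have emin1 : ∀ s : Fin p → Fin z,
        cntj X z (min h p) (fun i => s (Fin.castLE (min_le_right h p) i))
          = cntj X z h (fun i => s (Fin.castLE hhp i)) := by
      intro s
      exact cnt_castLE_congr X z p (min_eq_left hhp) (min_le_right h p) hhp s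
    have emin2 : ∀ s : Fin p → Fin z,
        cntj X z (min (h+1) p) (fun i => s (Fin.castLE (min_le_right (h+1) p) i))
          = cntj X z (h+1) (fun i => s (Fin.castLE hh i)) := by
      intro s
      exact cnt_castLE_congr X z p (min_eq_left hh) (min_le_right (h+1) p) hh s
    simp only [emin1, emin2, sq_abs, show p - (h+1) = p - h - 1 from by omega]
    rw [← Finset.sum_sub_distrib]
    rw [← Finset.sum_fiberwise_of_maps_to
      (g := fun s : Fin p → Fin z => (fun i : Fin (h+1) => s (Fin.castLE hh i)))
      (fun x _ => Finset.mem_univ _)]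
    rw [Finset.mul_sum]
    apply Finset.sum_congr rfl
    intro t _
    have hFeq : Finset.univ.filter
          (fun s : Fin p → Fin z => (fun i : Fin (h+1) => s (Fin.castLE hh i)) = t)
        = Finset.univ.filter
          (fun s : Fin p → Fin z => ∀ i : Fin (h+1), s (Fin.castLE hh i) = t i) :=
      Finset.filter_congr fun s _ => by simp [funext_iff]
    have hd1 : (h+1) + (p - (h+1)) = p := by omega
    have epd : p - (h+1) = p - h - 1 := by omega
    have hBsum : ∑ s ∈ Finset.univ.filter
          (fun s : Fin p → Fin z => (fun i : Fin (h+1) => s (Fin.castLE hh i)) = t),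
          cntj X z p s = cntj X z (h+1) t := by
      rw [hFeq, ← fiber_sum X z p hzp (p - (h+1)) (h+1) hd1 hh t]
    have hFcard : (Finset.univ.filter
          (fun s : Fin p → Fin z => (fun i : Fin (h+1) => s (Fin.castLE hh i)) = t)).card
        = z ^ (p - h - 1) := by
      rw [hFeq, fiber_card z p hzp (p - (h+1)) (h+1) hd1 hh t, epd]
    set B : ℝ := (cntj X z (h+1) t : ℝ) with hB
    set C : ℝ := (cntj X z h (fun i => t (Fin.castLE (Nat.le_succ h) i)) : ℝ) with hC
    set N : ℝ := (z:ℝ) ^ (p - h - 1) with hNdef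
    have hN : N ≠ 0 := ne_of_gt hNpos
    have hZ : (z:ℝ) ^ (p - h) = N * z := by
      rw [hNdef, ← pow_succ, ← e1]
    have hstep : ∀ s ∈ Finset.univ.filter
          (fun s : Fin p → Fin z => (fun i : Fin (h+1) => s (Fin.castLE hh i)) = t),
        ((cntj X z p s : ℝ) - (cntj X z h (fun i => s (Fin.castLE hhp i)) : ℝ)
            / (z:ℝ) ^ (p - h)) ^ 2
          - ((cntj X z p s : ℝ) - (cntj X z (h+1) (fun i => s (Fin.castLE hh i)) : ℝ) / N) ^ 2
        = (2 * (B / N - C / (z:ℝ) ^ (p - h))) * (cntj X z p s : ℝ)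
            + (C ^ 2 / ((z:ℝ) ^ (p - h)) ^ 2 - B ^ 2 / N ^ 2) := by
      intro s hs
      have hmem := (Finset.mem_filter.1 hs).2
      have hb : ((cntj X z (h+1) (fun i => s (Fin.castLE hh i)) : ℕ) : ℝ) = B := by
        rw [hB, hmem]
      have hc : ((cntj X z h (fun i => s (Fin.castLE hhp i)) : ℕ) : ℝ) = C := by
        rw [hC, ← hmem]
        rfl
      rw [hb, hc]
      ring
    rw [Finset.sum_congr rfl hstep]
    rw [Finset.sum_add_distrib, ← Finset.mul_sum, Finset.sum_const, nsmul_eq_mul, hFcard]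
    have hsumR : ∑ s ∈ Finset.univ.filter
          (fun s : Fin p → Fin z => (fun i : Fin (h+1) => s (Fin.castLE hh i)) = t),
          (cntj X z p s : ℝ) = B := by
      rw [hB, ← hBsum]
      push_cast
      rfl
    rw [hsumR, hZ]
    have hNc : ((z ^ (p - h - 1) : ℕ) : ℝ) = N := by
      rw [hNdef]; push_cast; rfl
    rw [hNc]
    have hzne : (z:ℝ) ≠ 0 := ne_of_gt hzR
    field_simp
    ring
  refine ⟨key, ?_⟩
  have hpos : 0 ≤ (1 / (z : ℝ) ^ (p - h - 1)) *
        ∑ t : Fin (h + 1) → Fin z,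
          |(cntj X z (h + 1) t : ℝ) -
            (cntj X z h (fun i => t (Fin.castLE (Nat.le_succ h) i)) : ℝ) / (z : ℝ)| ^ 2 := by
    positivity
  linarith [key, hpos]
end

section
/- Let X ⊆ [0,1) be a finite set with M elements that is (A;M₁)-anti-crowded, meaning: for every subinterval I ⊆ [0,1) with |I| ≥ 1/M₁, one has |I ∩ X| ≤ A·M·|I|, where A ≥ 2 and 1 < M₁ ≤ M. Let z ≥ 2 and p ≥ 1 be integers with z^p ≤ M₁. Then S₀(X;p) = ∑_{s₁,…,s_p} ||I(s₁,…,s_p) ∩ X| − M/z^p|² ≤ A²M²/z^p. -/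
open scoped Classical

/-- The z-adic subinterval of `[0,1)` of length `z^(-p)` indexed by `s`. -/
noncomputable def zadic (z p : ℕ) (s : Fin p → Fin z) : Set ℝ :=
  Set.Ico (∑ i : Fin p, ((s i : ℕ) : ℝ) / (z : ℝ) ^ ((i : ℕ) + 1))
    ((∑ i : Fin p, ((s i : ℕ) : ℝ) / (z : ℝ) ^ ((i : ℕ) + 1)) + 1 / (z : ℝ) ^ p)

theorem stmt6 (z p M : ℕ) (hz : 2 ≤ z) (hp : 1 ≤ p) (A M₁ : ℝ)
    (hA : 2 ≤ A) (hM₁ : 1 < M₁) (hM₁M : M₁ ≤ (M : ℝ)) (hzp : (z : ℝ) ^ p ≤ M₁)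
    (X : Finset ℝ) (hXsub : ∀ x ∈ X, x ∈ Set.Ico (0:ℝ) 1) (hM : X.card = M)
    (hanti : ∀ c d : ℝ, 0 ≤ c → d ≤ 1 → 1 / M₁ ≤ d - c →
      ((X.filter (· ∈ Set.Ico c d)).card : ℝ) ≤ A * M * (d - c)) :
    ∑ s : Fin p → Fin z,
        |((X.filter (· ∈ zadic z p s)).card : ℝ) - (M : ℝ) / (z : ℝ) ^ p| ^ 2
      ≤ A ^ 2 * M ^ 2 / (z : ℝ) ^ p := by
  have hz0 : (0:ℝ) < (z:ℝ) := by positivity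
  have hzp0 : (0:ℝ) < (z:ℝ) ^ p := by positivity
  have hM0 : (0:ℝ) ≤ (M:ℝ) := Nat.cast_nonneg M
  have hA1 : (1:ℝ) ≤ A := by linarith
  have key : ∀ s : Fin p → Fin z,
      |((X.filter (· ∈ zadic z p s)).card : ℝ) - (M : ℝ) / (z : ℝ) ^ p| ^ 2
        ≤ (A * M / (z:ℝ)^p) ^ 2 := by
    intro s
    set c : ℝ := ∑ i : Fin p, ((s i : ℕ) : ℝ) / (z : ℝ) ^ ((i : ℕ) + 1) with hc
    have hc0 : 0 ≤ c := by
      apply Finset.sum_nonneg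
      intro i _
      positivity
    have hcle : c ≤ 1 - 1/(z:ℝ)^p := by
      have h1 : c ≤ ∑ i : Fin p, ((z:ℝ)-1) / (z : ℝ) ^ ((i : ℕ) + 1) := by
        rw [hc]
        gcongr with i _
        have h2 : (s i : ℕ) + 1 ≤ z := (s i).isLt
        have h3 := Nat.cast_le (α := ℝ).mpr h2
        push_cast at h3
        linarith
      have h4 : ∑ i : Fin p, ((z:ℝ)-1) / (z : ℝ) ^ ((i : ℕ) + 1) = 1 - 1/(z:ℝ)^p := by
        rw [Fin.sum_univ_eq_sum_range (fun i => ((z:ℝ)-1) / (z : ℝ) ^ (i + 1)) p]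
        have hterm : ∀ i, ((z:ℝ)-1) / (z:ℝ) ^ (i+1) = (1/(z:ℝ))^i - (1/(z:ℝ))^(i+1) := by
          intro i; rw [one_div_pow, one_div_pow]; field_simp; ring
        simp only [hterm]
        rw [Finset.sum_range_sub' (f := fun i => (1/(z:ℝ))^i)]
        simp [one_div, inv_pow]
      linarith
    have hd1 : c + 1/(z:ℝ)^p ≤ 1 := by linarith
    have hlen : 1 / M₁ ≤ (c + 1/(z:ℝ)^p) - c := by
      have : 1/M₁ ≤ 1/(z:ℝ)^p := one_div_le_one_div_of_le hzp0 hzp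
      linarith
    have hcount := hanti c (c + 1/(z:ℝ)^p) hc0 hd1 hlen
    have hNle : ((X.filter (· ∈ zadic z p s)).card : ℝ) ≤ A * M / (z:ℝ)^p := by
      have heq : zadic z p s = Set.Ico c (c + 1/(z:ℝ)^p) := rfl
      have h6 : X.filter (· ∈ zadic z p s)
          = X.filter (· ∈ Set.Ico c (c + 1/(z:ℝ)^p)) := by
        apply Finset.filter_congr
        intro x _
        rw [heq]
      rw [h6]
      have h5 : A * (M:ℝ) * ((c + 1/(z:ℝ)^p) - c) = A * M / (z:ℝ)^p := by ring
      linarith [hcount]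
    have hN0 : (0:ℝ) ≤ ((X.filter (· ∈ zadic z p s)).card : ℝ) := Nat.cast_nonneg _
    have hMle : (M:ℝ) / (z:ℝ)^p ≤ A * M / (z:ℝ)^p := by
      gcongr
      nlinarith
    have hMp0 : (0:ℝ) ≤ (M:ℝ) / (z:ℝ)^p := by positivity
    have habs : |((X.filter (· ∈ zadic z p s)).card : ℝ) - (M : ℝ) / (z : ℝ) ^ p|
        ≤ A * M / (z:ℝ)^p := by
      rw [abs_le]
      constructor <;> linarith
    exact pow_le_pow_left₀ (abs_nonneg _) habs 2
  refine le_trans (Finset.sum_le_sum (fun s _ => key s)) ?_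
  rw [Finset.sum_const, nsmul_eq_mul]
  have hcard : (((Finset.univ : Finset (Fin p → Fin z)).card : ℕ) : ℝ) = (z:ℝ)^p := by
    simp [Finset.card_univ]
  rw [hcard]
  have hfin : (z:ℝ)^p * (A * M / (z:ℝ)^p) ^ 2 = A ^ 2 * M ^ 2 / (z : ℝ) ^ p := by
    field_simp
  linarith
end

section
/- Let X ⊆ [0,1) be a finite set with M elements that is (A;M₁)-anti-crowded with A ≥ 2, 1 < M₁ ≤ M, and let z ≥ 2, p ≥ 1 be integers with z^p ≤ M₁. Then ∫₀¹ S₀(X;τ;p) dτ ≤ A²M²/z^p, where S₀(X;τ;p) = ∑_{s₁,…,s_p} ||(I(s₁,…,s_p) − τ) ∩ X| − M/z^p|² with intervals taken modulo 1. -/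
open scoped Classical

/-- `S₀(X;τ;p)` with intervals translated modulo 1. -/
noncomputable def S0tau (X : Finset ℝ) (z p M : ℕ) (τ : ℝ) : ℝ :=
  ∑ s : Fin p → Fin z,
    |((X.filter fun x => Int.fract (x + τ) ∈ zadic z p s).card : ℝ) -
      (M : ℝ) / (z : ℝ) ^ p| ^ 2

lemma fract_mem_Ico_iff (y a L : ℝ) (ha : 0 ≤ a) (hL : 0 < L) (haL : a + L ≤ 1) :
    Int.fract y ∈ Set.Ico a (a + L) ↔ Int.fract (y - a) < L := by
  have hrw : Int.fract (y - a) = Int.fract (Int.fract y - a) := by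
    have : y - a = (Int.fract y - a) + (⌊y⌋ : ℤ) := by rw [Int.fract]; ring
    rw [this, Int.fract_add_intCast]
  set t := Int.fract y with ht
  have ht0 : 0 ≤ t := Int.fract_nonneg y
  have ht1 : t < 1 := Int.fract_lt_one y
  rcases le_or_gt a t with hat | hat
  · have : Int.fract (t - a) = t - a := Int.fract_eq_self.mpr ⟨by linarith, by linarith⟩
    rw [hrw, this]
    constructor
    · rintro ⟨h1, h2⟩; linarith
    · intro h; exact ⟨hat, by linarith⟩
  · have heq2 : Int.fract (t - a) = t - a + 1 := by
      calc Int.fract (t - a) = Int.fract ((t - a + 1) + ((-1 : ℤ) : ℝ)) := by norm_num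
        _ = Int.fract (t - a + 1) := Int.fract_add_intCast _ _
        _ = t - a + 1 := Int.fract_eq_self.mpr ⟨by linarith, by linarith⟩
    rw [hrw, heq2]
    constructor
    · rintro ⟨h1, _⟩; linarith
    · intro h; exfalso; linarith

theorem stmt8 (z p M : ℕ) (hz : 2 ≤ z) (hp : 1 ≤ p) (A M₁ : ℝ)
    (hA : 2 ≤ A) (hM₁ : 1 < M₁) (hM₁M : M₁ ≤ (M : ℝ)) (hzp : (z : ℝ) ^ p ≤ M₁)
    (X : Finset ℝ) (hXsub : ∀ x ∈ X, x ∈ Set.Ico (0:ℝ) 1) (hM : X.card = M)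
    (hanti : ∀ c L : ℝ, 1 / M₁ ≤ L → L ≤ 1 →
      ((X.filter fun x => Int.fract (x - c) < L).card : ℝ) ≤ A * M * L) :
    ∫ τ in (0:ℝ)..1, S0tau X z p M τ ≤ A ^ 2 * M ^ 2 / (z : ℝ) ^ p := by
  have hzR : (2:ℝ) ≤ (z:ℝ) := by exact_mod_cast hz
  have hz0 : (0:ℝ) < (z:ℝ) := by linarith
  have hzp0 : (0:ℝ) < (z:ℝ) ^ p := pow_pos hz0 p
  have hzp1 : (1:ℝ) ≤ (z:ℝ) ^ p := one_le_pow₀ (by linarith)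
  have hM0 : (0:ℝ) ≤ (M:ℝ) := Nat.cast_nonneg M
  set C : ℝ := A * M / (z:ℝ) ^ p with hC
  have hC0 : 0 ≤ C := by positivity
  -- the left endpoints of the z-adic intervals
  have hends : ∀ s : Fin p → Fin z,
      0 ≤ (∑ i : Fin p, ((s i : ℕ) : ℝ) / (z : ℝ) ^ ((i : ℕ) + 1)) ∧
      (∑ i : Fin p, ((s i : ℕ) : ℝ) / (z : ℝ) ^ ((i : ℕ) + 1)) + 1 / (z : ℝ) ^ p ≤ 1 := by
    intro s
    constructor
    · exact Finset.sum_nonneg fun i _ => by positivity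
    · have hle : (∑ i : Fin p, ((s i : ℕ) : ℝ) / (z : ℝ) ^ ((i : ℕ) + 1)) ≤
          ∑ i : Fin p, ((z:ℝ) - 1) / (z : ℝ) ^ ((i : ℕ) + 1) := by
        apply Finset.sum_le_sum
        intro i _
        have hsi : ((s i : ℕ) : ℝ) ≤ (z:ℝ) - 1 := by
          have : (s i : ℕ) + 1 ≤ z := (s i).2
          have := (Nat.cast_le (α := ℝ)).mpr this
          push_cast at this; linarith
        gcongr
      have heq : ∑ i : Fin p, ((z:ℝ) - 1) / (z : ℝ) ^ ((i : ℕ) + 1)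
          = 1 - 1 / (z:ℝ) ^ p := by
        have : ∀ i : ℕ, ((z:ℝ) - 1) / (z : ℝ) ^ (i + 1)
            = 1 / (z:ℝ) ^ i - 1 / (z:ℝ) ^ (i + 1) := by
          intro i
          have hzi : (z:ℝ) ^ i ≠ 0 := by positivity
          field_simp
          ring
        rw [Fin.sum_univ_eq_sum_range fun i => ((z:ℝ) - 1) / (z : ℝ) ^ (i + 1)]
        calc ∑ i ∈ Finset.range p, ((z:ℝ) - 1) / (z : ℝ) ^ (i + 1)
            = ∑ i ∈ Finset.range p, (1 / (z:ℝ) ^ i - 1 / (z:ℝ) ^ (i + 1)) := by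
              exact Finset.sum_congr rfl fun i _ => this i
          _ = 1 / (z:ℝ) ^ 0 - 1 / (z:ℝ) ^ p := Finset.sum_range_sub' (fun i => 1 / (z:ℝ) ^ i) p
          _ = 1 - 1 / (z:ℝ) ^ p := by norm_num
      linarith [heq ▸ hle]
  -- pointwise count bound
  have hcount : ∀ (τ : ℝ) (s : Fin p → Fin z),
      ((X.filter fun x => Int.fract (x + τ) ∈ zadic z p s).card : ℝ) ≤ C := by
    intro τ s
    set a : ℝ := ∑ i : Fin p, ((s i : ℕ) : ℝ) / (z : ℝ) ^ ((i : ℕ) + 1) with haa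
    obtain ⟨ha0, ha1⟩ := hends s
    have hfilter : (X.filter fun x => Int.fract (x + τ) ∈ zadic z p s)
        = X.filter fun x => Int.fract (x - (a - τ)) < 1 / (z:ℝ) ^ p := by
      apply Finset.filter_congr
      intro x _
      have h1 : x - (a - τ) = (x + τ) - a := by ring
      rw [h1]
      simp only [zadic, ← haa]
      exact ⟨fun h => (fract_mem_Ico_iff (x + τ) a (1 / (z:ℝ) ^ p) ha0 (by positivity) ha1).mp h,
        fun h => (fract_mem_Ico_iff (x + τ) a (1 / (z:ℝ) ^ p) ha0 (by positivity) ha1).mpr h⟩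
    rw [hfilter]
    have h1 : 1 / M₁ ≤ 1 / (z:ℝ) ^ p :=
      one_div_le_one_div_of_le hzp0 hzp
    have h2 : 1 / (z:ℝ) ^ p ≤ 1 := by
      rw [div_le_one hzp0]; exact hzp1
    have := hanti (a - τ) (1 / (z:ℝ) ^ p) h1 h2
    calc ((X.filter fun x => Int.fract (x - (a - τ)) < 1 / (z:ℝ) ^ p).card : ℝ)
        ≤ A * M * (1 / (z:ℝ) ^ p) := this
      _ = C := by rw [hC]; ring
  -- pointwise bound on S0tau
  have hpt : ∀ τ : ℝ, S0tau X z p M τ ≤ A ^ 2 * M ^ 2 / (z : ℝ) ^ p := by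
    intro τ
    have hterm : ∀ s : Fin p → Fin z,
        |((X.filter fun x => Int.fract (x + τ) ∈ zadic z p s).card : ℝ) -
          (M : ℝ) / (z : ℝ) ^ p| ^ 2 ≤ C ^ 2 := by
      intro s
      have hN0 : (0:ℝ) ≤ ((X.filter fun x => Int.fract (x + τ) ∈ zadic z p s).card : ℝ) :=
        Nat.cast_nonneg _
      have hNC := hcount τ s
      have hm0 : (0:ℝ) ≤ (M:ℝ) / (z:ℝ) ^ p := by positivity
      have hmC : (M:ℝ) / (z:ℝ) ^ p ≤ C := by
        rw [hC]; gcongr; nlinarith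
      have habs : |((X.filter fun x => Int.fract (x + τ) ∈ zadic z p s).card : ℝ) -
          (M : ℝ) / (z : ℝ) ^ p| ≤ C := by
        rw [abs_le]
        constructor <;> [linarith; linarith]
      exact pow_le_pow_left₀ (abs_nonneg _) habs 2
    have hsum : S0tau X z p M τ ≤ ∑ _s : Fin p → Fin z, C ^ 2 :=
      Finset.sum_le_sum fun s _ => hterm s
    have hcard : (Fintype.card (Fin p → Fin z) : ℝ) = (z:ℝ) ^ p := by
      simp [Fintype.card_fun]
    calc S0tau X z p M τ ≤ ∑ _s : Fin p → Fin z, C ^ 2 := hsum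
      _ = (Fintype.card (Fin p → Fin z) : ℝ) * C ^ 2 := by
          rw [Finset.sum_const, Finset.card_univ, nsmul_eq_mul]
      _ = (z:ℝ) ^ p * (A * M / (z:ℝ) ^ p) ^ 2 := by rw [hcard, hC]
      _ = A ^ 2 * M ^ 2 / (z : ℝ) ^ p := by field_simp
  -- conclude via the norm bound for interval integrals
  have hnonneg : ∀ τ : ℝ, 0 ≤ S0tau X z p M τ := fun τ =>
    Finset.sum_nonneg fun s _ => by positivity
  have hnorm := intervalIntegral.norm_integral_le_of_norm_le_const
    (a := (0:ℝ)) (b := 1) (C := A ^ 2 * M ^ 2 / (z : ℝ) ^ p) (f := S0tau X z p M)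
    (fun τ _ => by rw [Real.norm_eq_abs, abs_of_nonneg (hnonneg τ)]; exact hpt τ)
  rw [Real.norm_eq_abs] at hnorm
  have h1 : |(1:ℝ) - 0| = 1 := by norm_num
  rw [h1, mul_one] at hnorm
  linarith [le_abs_self (∫ τ in (0:ℝ)..1, S0tau X z p M τ)]
end

section
/- Let T : [0,1) → [0,1) be a bijection, X = {x₁,…,x_M} = {T^j x₁ : 0 ≤ j ≤ M−1} an orbit segment, I ⊆ [0,1) an interval, and J a set of K consecutive integers containing 0 such that the sets T^j I, j ∈ J, are pairwise disjoint. Then ∑_{j ∈ J} |I ∩ T^{−j}X| ≥ K·|I ∩ X| − K, i.e. ∑_{j ∈ J} |I ∩ T^{−j}X| ≥ ∑_{j ∈ J}|I ∩ X| − (j⁺ − j⁻) where j⁺ = max J ≥ 0 and j⁻ = min J ≤ 0. -/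
open scoped Classical

theorem stmt9 {α : Type*} [DecidableEq α] (T : Equiv.Perm α) (x₁ : α) (M : ℕ)
    (hM : 0 < M)
    (hinj : Function.Injective fun i : Fin M => (T ^ (i : ℕ)) x₁)
    (X : Finset α) (hX : X = (Finset.range M).image fun i => (T ^ i) x₁)
    (I : Set α) (a : ℤ) (K : ℕ) (hK : 0 < K)
    (J : Finset ℤ) (hJ : J = Finset.Ico a (a + K)) (h0 : (0 : ℤ) ∈ J)
    (hdisj : ∀ j ∈ J, ∀ j' ∈ J, j ≠ j' → Disjoint (⇑(T ^ j) '' I) (⇑(T ^ j') '' I)) :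
    (K : ℤ) * ((X.filter (· ∈ I)).card : ℤ) - K ≤
      ∑ j ∈ J, (((X.image fun y => (T ^ (-j)) y).filter (· ∈ I)).card : ℤ) := by
  subst hJ
  have haJ : a ∈ Finset.Ico a (a + K) := by
    simp only [Finset.mem_Ico] at h0 ⊢; omega
  have ha0 : a ≤ 0 ∧ 0 < a + K := by simpa [Finset.mem_Ico] using h0
  -- membership in X for integer exponents in [0, M)
  have hmemX : ∀ n : ℤ, 0 ≤ n → n < M → (T ^ n) x₁ ∈ X := by
    intro n hn hnM
    have h : n = ((n.toNat : ℕ) : ℤ) := by omega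
    rw [hX, Finset.mem_image]
    exact ⟨n.toNat, Finset.mem_range.mpr (by omega), by rw [← zpow_natCast, ← h]⟩
  -- key lemma (ordered version)
  have key' : ∀ m n : ℤ, (T ^ m) x₁ ∈ I → (T ^ n) x₁ ∈ I → 0 < n - m → n - m < K →
      False := by
    intro m n hm hn hd1 hd2
    have hdJ : a + (n - m) ∈ Finset.Ico a (a + K) := by
      simp only [Finset.mem_Ico]; omega
    have hne : a + (n - m) ≠ a := by omega
    have hdis := hdisj _ hdJ a haJ hne
    have hz1 : (T ^ (a + n)) x₁ ∈ ⇑(T ^ (a + (n - m))) '' I := by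
      refine ⟨(T ^ m) x₁, hm, ?_⟩
      rw [← Equiv.Perm.mul_apply, ← zpow_add]
      congr 1
      ring
    have hz2 : (T ^ (a + n)) x₁ ∈ ⇑(T ^ a) '' I := by
      refine ⟨(T ^ n) x₁, hn, ?_⟩
      rw [← Equiv.Perm.mul_apply, ← zpow_add]
    exact Set.disjoint_left.mp hdis hz1 hz2
  have key : ∀ m n : ℤ, (T ^ m) x₁ ∈ I → (T ^ n) x₁ ∈ I → m ≠ n →
      (n - m).natAbs < K → False := by
    intro m n hm hn hne habs
    rcases lt_trichotomy m n with h | h | h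
    · exact key' m n hm hn (by omega) (by omega)
    · exact hne h
    · exact key' n m hn hm (by omega) (by omega)
  -- per-j bound
  have hbound : ∀ j ∈ Finset.Ico a (a + K),
      ((X.filter (· ∈ I)).card : ℤ) - 1 ≤
        (((X.image fun y => (T ^ (-j)) y).filter (· ∈ I)).card : ℤ) := by
    intro j hj
    have hjb : -(K : ℤ) < j ∧ j < K := by
      simp only [Finset.mem_Ico] at hj; omega
    set Aj := (X.image fun y => (T ^ (-j)) y).filter (· ∈ I) with hAj
    have hsplit := Finset.card_filter_add_card_filter_not
      (s := X.filter (· ∈ I)) (p := (· ∈ Aj))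
    have h1 : ((X.filter (· ∈ I)).filter (· ∈ Aj)).card ≤ Aj.card :=
      Finset.card_le_card (fun y hy => (Finset.mem_filter.mp hy).2)
    have h2 : ((X.filter (· ∈ I)).filter (· ∉ Aj)).card ≤ 1 := by
      apply Finset.card_le_one.mpr
      intro y hy y' hy'
      simp only [Finset.mem_filter] at hy hy'
      obtain ⟨⟨hyX, hyI⟩, hyA⟩ := hy
      obtain ⟨⟨hyX', hyI'⟩, hyA'⟩ := hy'
      rw [hX, Finset.mem_image] at hyX hyX'
      obtain ⟨i, hi, hiy⟩ := hyX
      obtain ⟨i', hi', hiy'⟩ := hyX'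
      rw [Finset.mem_range] at hi hi'
      set n : ℤ := (i : ℤ)
      set n' : ℤ := (i' : ℤ)
      have hyn : (T ^ n) x₁ = y := by rw [← hiy, zpow_natCast]
      have hyn' : (T ^ n') x₁ = y' := by rw [← hiy', zpow_natCast]
      -- y ∉ Aj means j + n ∉ [0, M)
      have hout : ∀ (m : ℤ) (z : α), (T ^ m) x₁ = z → z ∈ I → z ∉ Aj →
          j + m < 0 ∨ (M : ℤ) ≤ j + m := by
        intro m z hzm hzI hzA
        by_contra hcon
        push_neg at hcon
        apply hzA
        rw [hAj, Finset.mem_filter]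
        refine ⟨Finset.mem_image.mpr ⟨(T ^ (j + m)) x₁, hmemX _ hcon.1 hcon.2, ?_⟩, hzI⟩
        rw [← Equiv.Perm.mul_apply, ← zpow_add, ← hzm]
        congr 1
        ring_nf
      have ho := hout n y hyn hyI hyA
      have ho' := hout n' y' hyn' hyI' hyA'
      by_contra hne
      have hnn : n ≠ n' := by
        intro h
        apply hne
        rw [← hyn, ← hyn', h]
      have habs : (n' - n).natAbs < K := by omega
      exact key n n' (hyn ▸ hyI) (hyn' ▸ hyI') hnn habs
    have : (X.filter (· ∈ I)).card ≤ Aj.card + 1 := by omega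
    push_cast
    omega
  calc (K : ℤ) * ((X.filter (· ∈ I)).card : ℤ) - K
      = ∑ _j ∈ Finset.Ico a (a + K), (((X.filter (· ∈ I)).card : ℤ) - 1) := by
        rw [Finset.sum_const, Int.card_Ico]
        push_cast
        ring_nf
        rw [Int.toNat_of_nonneg (by omega)]
        ring
    _ ≤ _ := Finset.sum_le_sum hbound
end

section
/- Let T : [0,1) → [0,1) be a bijection and X ⊆ [0,1) a finite set with |X| = M. Let J be a set of K consecutive integers containing 0, and suppose an interval I ⊆ [0,1) satisfies: the intervals T^j I, j ∈ J, are pairwise disjoint, X = {T^j x : 0 ≤ j < M} for some x, M > K, and |I ∩ X| = C·M·|I| with K·C·M·|I| − K > M. Then a contradiction follows; equivalently, |I ∩ X|/(M|I|) ≤ (M + K)/(K·M·|I|). -/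
open scoped Classical

theorem stmt10 {α : Type*} [DecidableEq α] (T : Equiv.Perm α) (x₁ : α) (M : ℕ)
    (hM : 0 < M)
    (hinj : Function.Injective fun i : Fin M => (T ^ (i : ℕ)) x₁)
    (X : Finset α) (hX : X = (Finset.range M).image fun i => (T ^ i) x₁)
    (I : Set α) (a : ℤ) (K : ℕ) (hK : 0 < K)
    (J : Finset ℤ) (hJ : J = Finset.Ico a (a + K)) (h0 : (0 : ℤ) ∈ J)
    (hdisj : ∀ j ∈ J, ∀ j' ∈ J, j ≠ j' → Disjoint (⇑(T ^ j) '' I) (⇑(T ^ j') '' I))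
    (hMK : K < M) (ℓ C : ℝ) (hℓ : 0 < ℓ)
    (hC : ((X.filter (· ∈ I)).card : ℝ) = C * M * ℓ)
    (hbig : (K : ℝ) * C * M * ℓ - K > M) : False := by
  -- injectivity on naturals below M
  have hinj' : ∀ t < M, ∀ t' < M, (T ^ t) x₁ = (T ^ t') x₁ → t = t' := by
    intro t ht t' ht' h
    have := hinj (a₁ := ⟨t, ht⟩) (a₂ := ⟨t', ht'⟩) h
    exact congrArg Fin.val this
  set S : Finset ℕ := (Finset.range M).filter (fun t => (T ^ t) x₁ ∈ I) with hS
  -- cardinality of S equals the count in I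
  have hScard : (X.filter (· ∈ I)).card = S.card := by
    rw [hX, Finset.filter_image]
    apply Finset.card_image_of_injOn
    intro t ht t' ht' h
    simp only [Finset.mem_coe, Finset.mem_filter, Finset.mem_range] at ht ht'
    exact hinj' t ht.1 t' ht'.1 h
  -- key fact
  have key : ∀ t : ℕ, ∀ j : ℤ, (T ^ ((t : ℤ) + j)) x₁ = (T ^ j) ((T ^ t) x₁) := by
    intro t j
    rw [add_comm, zpow_add, Equiv.Perm.mul_apply, zpow_natCast]
  -- injective map from S ×ˢ J into Ico a (a + (M + K - 1))
  have hcard : S.card * K ≤ M + K - 1 := by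
    have := Finset.card_le_card_of_injOn (f := fun p : ℕ × ℤ => (p.1 : ℤ) + p.2)
      (s := S ×ˢ J) (t := Finset.Ico a (a + (M + K - 1)))
      (by
        rintro ⟨t, j⟩ hp
        simp only [Finset.mem_coe, Finset.mem_product, hS, Finset.mem_filter, Finset.mem_range, hJ,
          Finset.mem_Ico] at hp
        obtain ⟨⟨htM, _⟩, hja, hjb⟩ := hp
        simp only [Finset.mem_coe, Finset.mem_Ico]
        constructor
        · omega
        · push_cast
          omega)
      (by
        rintro ⟨t, j⟩ hp ⟨t', j'⟩ hp' h
        simp only [Finset.mem_coe, Finset.mem_product, hS, Finset.mem_filter,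
          Finset.mem_range] at hp hp'
        obtain ⟨⟨htM, htI⟩, hjJ⟩ := hp
        obtain ⟨⟨htM', htI'⟩, hjJ'⟩ := hp'
        simp only at h
        have hjj : j = j' := by
          by_contra hne
          have hd := hdisj j hjJ j' hjJ' hne
          have hmem : (T ^ ((t : ℤ) + j)) x₁ ∈ (⇑(T ^ j) '' I) := by
            rw [key]; exact Set.mem_image_of_mem _ htI
          have hmem' : (T ^ ((t : ℤ) + j)) x₁ ∈ (⇑(T ^ j') '' I) := by
            rw [h, key]; exact Set.mem_image_of_mem _ htI'
          exact Set.disjoint_left.mp hd hmem hmem'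
        have htt : t = t' := by
          have : (t : ℤ) = t' := by omega
          exact_mod_cast this
        simp [hjj, htt])
    have hJc : J.card = K := by rw [hJ]; simp
    rw [Finset.card_product, hJc] at this
    have hIc : (Finset.Ico a (a + ((M : ℤ) + K - 1))).card = M + K - 1 := by
      rw [Int.card_Ico]; omega
    calc S.card * K ≤ (Finset.Ico a (a + ((M : ℤ) + (K : ℤ) - 1))).card := by
          exact this
      _ = M + K - 1 := hIc
  -- conclude
  have hN : ((X.filter (· ∈ I)).card : ℝ) * K ≤ (M : ℝ) + K - 1 := by
    rw [hScard]
    have : (S.card * K : ℕ) ≤ M + K - 1 := hcard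
    have h1 : ((S.card * K : ℕ) : ℝ) ≤ ((M + K - 1 : ℕ) : ℝ) := by exact_mod_cast this
    rw [Nat.cast_sub (by omega)] at h1
    push_cast at h1 ⊢
    linarith
  rw [hC] at hN
  nlinarith [hbig]
end

section
/- With T, X, J, X⁺, X⁻ as above (X⁻ ⊆ X ⊆ X⁺, |X⁺ \ X⁻| ≤ 2K), suppose I ⊆ [0,1) is an interval such that the sets T^j I, j ∈ J, are pairwise disjoint. Then ∑_{j ∈ J} | |T^j I ∩ X| − |I ∩ X| | ≤ 2K. -/
open scoped Classical

private lemma sandwich_card {α : Type*} [DecidableEq α] (p : α → Prop) [DecidablePred p]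
    {L B C U : Finset α} (hLB : L ⊆ B) (hBU : B ⊆ U) (hLC : L ⊆ C) (hCU : C ⊆ U) :
    |((B.filter p).card : ℤ) - ((C.filter p).card : ℤ)| ≤ (((U \ L).filter p).card : ℤ) := by
  have hsd : (U \ L).filter p = U.filter p \ L.filter p := by
    ext x; simp only [Finset.mem_sdiff, Finset.mem_filter]; tauto
  have hLU : L.filter p ⊆ U.filter p := Finset.filter_subset_filter p (hLB.trans hBU)
  have h5 : (U.filter p \ L.filter p).card + (L.filter p).card = (U.filter p).card :=
    Finset.card_sdiff_add_card_eq_card hLU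
  have h1 : (L.filter p).card ≤ (B.filter p).card :=
    Finset.card_le_card (Finset.filter_subset_filter p hLB)
  have h2 : (B.filter p).card ≤ (U.filter p).card :=
    Finset.card_le_card (Finset.filter_subset_filter p hBU)
  have h3 : (L.filter p).card ≤ (C.filter p).card :=
    Finset.card_le_card (Finset.filter_subset_filter p hLC)
  have h4 : (C.filter p).card ≤ (U.filter p).card :=
    Finset.card_le_card (Finset.filter_subset_filter p hCU)
  rw [hsd]
  rw [abs_le]
  constructor <;> [skip; skip] <;>
  · push_cast
    omega

theorem stmt12 {α : Type*} [DecidableEq α] (T : Equiv.Perm α) (x₁ : α) (M : ℕ)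
    (hM : 0 < M)
    (hinj : Function.Injective fun i : Fin M => (T ^ (i : ℕ)) x₁)
    (X : Finset α) (hX : X = (Finset.range M).image fun i => (T ^ i) x₁)
    (a : ℤ) (K : ℕ) (hK : 0 < K)
    (J : Finset ℤ) (hJ : J = Finset.Ico a (a + K)) (h0 : (0 : ℤ) ∈ J)
    (I : Set α)
    (hdisj : ∀ j ∈ J, ∀ j' ∈ J, j ≠ j' → Disjoint (⇑(T ^ j) '' I) (⇑(T ^ j') '' I)) :
    ∑ j ∈ J,
        |((X.filter (· ∈ ⇑(T ^ j) '' I)).card : ℤ) - ((X.filter (· ∈ I)).card : ℤ)|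
      ≤ 2 * K := by
  classical
  set f : ℤ → α := fun k => (T ^ k) x₁ with hf
  have hcomm : ∀ (j i : ℤ), (T ^ j) (f i) = f (j + i) := by
    intro j i
    simp only [hf, ← Equiv.Perm.mul_apply, ← zpow_add]
  -- X as an image over an integer interval
  have hX0 : X = (Finset.Ico (0 : ℤ) (M : ℤ)).image f := by
    rw [hX]; ext x
    simp only [Finset.mem_image, Finset.mem_range, Finset.mem_Ico]
    constructor
    · rintro ⟨i, hi, rfl⟩
      refine ⟨(i : ℤ), ⟨by positivity, by exact_mod_cast hi⟩, ?_⟩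
      simp [hf, zpow_natCast]
    · rintro ⟨k, ⟨hk0, hkM⟩, rfl⟩
      refine ⟨k.toNat, by omega, ?_⟩
      have hk : ((k.toNat : ℕ) : ℤ) = k := Int.toNat_of_nonneg hk0
      show (T ^ k.toNat) x₁ = f k
      simp only [hf]
      rw [← zpow_natCast, hk]
  -- the image of X under T^j
  have hTX : ∀ j : ℤ, X.image ⇑(T ^ j) = (Finset.Ico j ((M : ℤ) + j)).image f := by
    intro j
    rw [hX0, Finset.image_image]
    ext x
    simp only [Finset.mem_image, Finset.mem_Ico, Function.comp_apply]
    constructor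
    · rintro ⟨k, ⟨h0k, hkM⟩, rfl⟩
      exact ⟨j + k, ⟨by omega, by omega⟩, (hcomm j k).symm⟩
    · rintro ⟨k, ⟨hjk, hkM⟩, rfl⟩
      exact ⟨k - j, ⟨by omega, by omega⟩, by rw [hcomm]; ring_nf⟩
  -- key card equality
  have hkey : ∀ j : ℤ,
      (((X.image ⇑(T ^ j)).filter (· ∈ ⇑(T ^ j) '' I)).card) = ((X.filter (· ∈ I)).card) := by
    intro j
    have himg : (X.image ⇑(T ^ j)).filter (· ∈ ⇑(T ^ j) '' I)
        = (X.filter (· ∈ I)).image ⇑(T ^ j) := by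
      ext x
      simp only [Finset.mem_filter, Finset.mem_image, Set.mem_image]
      constructor
      · rintro ⟨⟨y, hy, rfl⟩, z, hz, hzx⟩
        have : z = y := (T ^ j).injective hzx
        exact ⟨y, ⟨hy, this ▸ hz⟩, rfl⟩
      · rintro ⟨y, ⟨hy, hyI⟩, rfl⟩
        exact ⟨⟨y, hy, rfl⟩, y, hyI, rfl⟩
    rw [himg, Finset.card_image_of_injective _ (T ^ j).injective]
  -- the sandwiching sets
  set Xp : Finset α := (Finset.Ico a ((M : ℤ) + a + K - 1)).image f with hXp
  set Xm : Finset α := (Finset.Ico (a + (K : ℤ) - 1) ((M : ℤ) + a)).image f with hXm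
  have hincl : ∀ j ∈ J, Xm ⊆ (Finset.Ico j ((M : ℤ) + j)).image f ∧
      (Finset.Ico j ((M : ℤ) + j)).image f ⊆ Xp := by
    intro j hj
    rw [hJ, Finset.mem_Ico] at hj
    constructor
    · exact Finset.image_subset_image (Finset.Ico_subset_Ico (by omega) (by omega))
    · exact Finset.image_subset_image (Finset.Ico_subset_Ico (by omega) (by omega))
  have hXeq : X = (Finset.Ico (0 : ℤ) ((M : ℤ) + 0)).image f := by
    rw [hX0]; norm_num
  have hXmX : Xm ⊆ X := by
    rw [hXeq]; exact (hincl 0 h0).1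
  have hXXp : X ⊆ Xp := by
    rw [hXeq]; exact (hincl 0 h0).2
  -- termwise bound
  have hterm : ∀ j ∈ J,
      |((X.filter (· ∈ ⇑(T ^ j) '' I)).card : ℤ) - ((X.filter (· ∈ I)).card : ℤ)|
        ≤ (((Xp \ Xm).filter (· ∈ ⇑(T ^ j) '' I)).card : ℤ) := by
    intro j hj
    rw [← hkey j]
    refine sandwich_card (· ∈ ⇑(T ^ j) '' I) hXmX hXXp ?_ ?_
    · rw [hTX j]; exact (hincl j hj).1
    · rw [hTX j]; exact (hincl j hj).2
  -- sum of the filters is at most the card of Xp \ Xm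
  have hdisjF : ∀ j ∈ J, ∀ j' ∈ J, j ≠ j' →
      Disjoint ((Xp \ Xm).filter (· ∈ ⇑(T ^ j) '' I))
        ((Xp \ Xm).filter (· ∈ ⇑(T ^ j') '' I)) := by
    intro j hj j' hj' hne
    rw [Finset.disjoint_left]
    intro x hx hx'
    rw [Finset.mem_filter] at hx hx'
    exact Set.disjoint_left.mp (hdisj j hj j' hj' hne) hx.2 hx'.2
  have hsum : ∑ j ∈ J, (((Xp \ Xm).filter (· ∈ ⇑(T ^ j) '' I)).card)
      = (J.biUnion fun j => (Xp \ Xm).filter (· ∈ ⇑(T ^ j) '' I)).card :=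
    (Finset.card_biUnion hdisjF).symm
  have hbU : (J.biUnion fun j => (Xp \ Xm).filter (· ∈ ⇑(T ^ j) '' I)) ⊆ Xp \ Xm := by
    intro x hx
    rw [Finset.mem_biUnion] at hx
    obtain ⟨j, _, hx⟩ := hx
    exact (Finset.mem_filter.mp hx).1
  -- card of Xp \ Xm
  have hcard : (Xp \ Xm).card ≤ 2 * K := by
    have hsub : Xp \ Xm ⊆
        ((Finset.Ico a (a + (K : ℤ) - 1)) ∪
          (Finset.Ico ((M : ℤ) + a) ((M : ℤ) + a + K - 1))).image f := by
      intro x hx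
      rw [Finset.mem_sdiff] at hx
      obtain ⟨hx1, hx2⟩ := hx
      rw [hXp, Finset.mem_image] at hx1
      obtain ⟨k, hk, rfl⟩ := hx1
      rw [Finset.mem_Ico] at hk
      have hkni : ¬ (a + (K : ℤ) - 1 ≤ k ∧ k < (M : ℤ) + a) := by
        intro hmem
        exact hx2 (by rw [hXm]; exact Finset.mem_image_of_mem f (Finset.mem_Ico.mpr hmem))
      refine Finset.mem_image_of_mem f ?_
      rw [Finset.mem_union, Finset.mem_Ico, Finset.mem_Ico]
      omega
    calc (Xp \ Xm).card ≤ _ := Finset.card_le_card hsub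
      _ ≤ ((Finset.Ico a (a + (K : ℤ) - 1)) ∪
            (Finset.Ico ((M : ℤ) + a) ((M : ℤ) + a + K - 1))).card := Finset.card_image_le
      _ ≤ (Finset.Ico a (a + (K : ℤ) - 1)).card +
            (Finset.Ico ((M : ℤ) + a) ((M : ℤ) + a + K - 1)).card := Finset.card_union_le _ _
      _ ≤ 2 * K := by
          rw [Int.card_Ico, Int.card_Ico]
          omega
  calc ∑ j ∈ J, |((X.filter (· ∈ ⇑(T ^ j) '' I)).card : ℤ) - ((X.filter (· ∈ I)).card : ℤ)|
      ≤ ∑ j ∈ J, (((Xp \ Xm).filter (· ∈ ⇑(T ^ j) '' I)).card : ℤ) :=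
        Finset.sum_le_sum hterm
    _ = ((∑ j ∈ J, ((Xp \ Xm).filter (· ∈ ⇑(T ^ j) '' I)).card : ℕ) : ℤ) := by push_cast; ring
    _ ≤ ((2 * K : ℕ) : ℤ) := by
        exact_mod_cast (hsum ▸ (Finset.card_le_card hbU)).trans hcard
    _ = 2 * K := by push_cast; ring
end

section
/- Let E be partitioned into z ≥ 2 consecutive equal subintervals I(1),…,I(z), let X be a finite set with M elements, and suppose the balance condition ||I(s) ∩ X| − |E ∩ X|/z| < δM/(z·L) holds for all s, where L is such that each I(s) has X-count expectation |E∩X|/z. If additionally for two such equal-length intervals E', E'' one has |E' ∩ X| − |E'' ∩ X| ≥ (3δM)/L with E' the left neighbor of E'', then the shifted interval I° consisting of the last subinterval of E' together with the first z−1 subintervals of E'' fails δ-balance: there exists s ∈ {1,…,z} with ||I°(s) ∩ X| − |I° ∩ X|/z| > δM/(zL), where I°(1),…,I°(z) are the z consecutive pieces of I°. -/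
open scoped Classical

/-- Number of points of `X` in the interval `[c, d)`, as a real number. -/
noncomputable def cntIco (X : Finset ℝ) (c d : ℝ) : ℝ :=
  ((X.filter fun x => x ∈ Set.Ico c d).card : ℝ)

/-! With `ε = δM/(zL)`, the first piece `I°(1)` of the shifted interval is the last piece of `E'`,
so it holds more than `|E' ∩ X|/z - ε` points, while `I°` is `E''` with its last piece traded
for that of `E'`. Bounding the two traded pieces from below gives
`|I°(1) ∩ X| - |I° ∩ X|/z > ((z - 1)/z) (|E' ∩ X| - |E'' ∩ X|)/z - ε ≥ (3(z - 1)/z - 1) ε`,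
which exceeds `ε` as soon as `z ≥ 4`. -/

lemma cntIco_add (X : Finset ℝ) {c d e : ℝ} (hcd : c ≤ d) (hde : d ≤ e) :
    cntIco X c d + cntIco X d e = cntIco X c e := by
  unfold cntIco
  rw [← Nat.cast_add, ← Finset.card_union_of_disjoint, ← Finset.filter_or]
  · simp only [← Set.mem_union, Set.Ico_union_Ico_eq_Ico hcd hde]
  · exact Finset.disjoint_filter_filter' _ _
      (Set.disjoint_left.mpr fun _ hx hx' => (not_le.2 hx.2) hx'.1)

lemma cntIco_eq_add_sub (X : Finset ℝ) {c d e f : ℝ} (hcd : c ≤ d) (hde : d ≤ e)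
    (hef : e ≤ f) :
    cntIco X c e = cntIco X c d + cntIco X d f - cntIco X e f := by
  rw [← cntIco_add X hcd hde, ← cntIco_add X hde hef]
  ring

lemma lt_sub_div_of_three_mul_le_sub {z ε A B P Q : ℝ} (hz : 3 < z) (hε : 0 ≤ ε)
    (hP : A / z < P + ε) (hQ : B / z < Q + ε) (hAB : 3 * z * ε ≤ A - B) :
    ε < P - (P + B - Q) / z := by
  have hz0 : 0 < z := by linarith
  have hP' := mul_lt_mul_of_pos_left hP (by linarith : (0 : ℝ) < z - 1)
  have hAB' : 3 * (z - 1) * ε ≤ (z - 1) * (A / z) - B + B / z := by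
    rw [show (z - 1) * (A / z) - B + B / z = (z - 1) * (A - B) / z by field_simp; ring,
      le_div_iff₀ hz0]
    nlinarith
  rw [show P - (P + B - Q) / z = ((z - 1) * P - B + Q) / z by field_simp; ring,
    lt_div_iff₀ hz0]
  nlinarith

theorem stmt15_general (z M : ℕ) (hz : 4 ≤ z) (δ a L : ℝ)
    (hL : 0 < L) (X : Finset ℝ)
    (hbal' : ∀ s ∈ Finset.Icc 1 z,
      |cntIco X (a + ((s : ℝ) - 1) / (z * L)) (a + (s : ℝ) / (z * L)) -
          cntIco X a (a + 1 / L) / z| < δ * M / (z * L))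
    (hbal'' : ∀ s ∈ Finset.Icc 1 z,
      |cntIco X (a + ((z : ℝ) + (s : ℝ) - 1) / (z * L)) (a + ((z : ℝ) + (s : ℝ)) / (z * L)) -
          cntIco X (a + 1 / L) (a + 2 / L) / z| < δ * M / (z * L))
    (hdiff : cntIco X a (a + 1 / L) - cntIco X (a + 1 / L) (a + 2 / L) ≥ 3 * δ * M / L) :
    ∃ s ∈ Finset.Icc 1 z,
      |cntIco X (a + ((z : ℝ) - 2 + (s : ℝ)) / (z * L)) (a + ((z : ℝ) - 1 + (s : ℝ)) / (z * L)) -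
          cntIco X (a + ((z : ℝ) - 1) / (z * L)) (a + ((z : ℝ) - 1) / (z * L) + 1 / L) / z|
        > δ * M / (z * L) := by
  have hzr : (4 : ℝ) ≤ z := by exact_mod_cast hz
  have hzL : 0 < (z : ℝ) * L := by positivity
  have hlast : z ∈ Finset.Icc 1 z := Finset.mem_Icc.2 ⟨by omega, le_rfl⟩
  have hε : 0 ≤ δ * M / (z * L) := (abs_nonneg _).trans (hbal' z hlast).le
  have hP := neg_lt_sub_iff_lt_add'.1 (abs_lt.1 (hbal' z hlast)).1
  have hQ := neg_lt_sub_iff_lt_add'.1 (abs_lt.1 (hbal'' z hlast)).1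
  have h1 : a + (z : ℝ) / (z * L) = a + 1 / L := by field_simp
  have h2 : a + ((z : ℝ) + z) / (z * L) = a + 2 / L := by field_simp; ring
  have h3 : a + ((z : ℝ) - 1) / (z * L) + 1 / L = a + ((z : ℝ) + z - 1) / (z * L) := by
    field_simp; ring
  have grid_mono : ∀ {s t : ℝ}, s ≤ t → a + s / (z * L) ≤ a + t / (z * L) := fun hst =>
    add_le_add_right (div_le_div_of_nonneg_right hst hzL.le) a
  have hshift : cntIco X (a + ((z : ℝ) - 1) / (z * L)) (a + ((z : ℝ) + z - 1) / (z * L)) =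
      cntIco X (a + ((z : ℝ) - 1) / (z * L)) (a + 1 / L) + cntIco X (a + 1 / L) (a + 2 / L) -
        cntIco X (a + ((z : ℝ) + z - 1) / (z * L)) (a + 2 / L) := by
    rw [← h1, ← h2]
    exact cntIco_eq_add_sub X (grid_mono (by linarith)) (grid_mono (by linarith))
      (grid_mono (by linarith))
  rw [h1] at hP
  rw [h2] at hQ
  refine ⟨1, Finset.mem_Icc.2 ⟨le_rfl, by omega⟩, ?_⟩
  rw [Nat.cast_one, sub_add_cancel, show (z : ℝ) - 2 + 1 = z - 1 by ring, h1, h3, hshift]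
  refine lt_of_lt_of_le (lt_sub_div_of_three_mul_le_sub (by linarith) hε hP hQ ?_) (le_abs_self _)
  calc 3 * (z : ℝ) * (δ * M / (z * L)) = 3 * δ * M / L := by field_simp
    _ ≤ _ := hdiff

/-- Abstracted version of Lemma 6.3: `E' = [a, a+1/L)` and `E'' = [a+1/L, a+2/L)`
are adjacent intervals of length `1/L`, each divided into `z` equal parts.
If both are `δ`-balanced but their counts differ by at least `3δM/L`, then the
shifted interval `I°` (last part of `E'` together with the first `z-1` parts of
`E''`) fails `δ`-balance. -/
theorem stmt15 (z M : ℕ) (hz : 4 ≤ z) (δ a L : ℝ) (hδ0 : 0 < δ) (hδ1 : δ < 1)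
    (hL : 0 < L) (X : Finset ℝ) (hM : X.card = M)
    (hbal' : ∀ s ∈ Finset.Icc 1 z,
      |cntIco X (a + ((s : ℝ) - 1) / (z * L)) (a + (s : ℝ) / (z * L)) -
          cntIco X a (a + 1 / L) / z| < δ * M / (z * L))
    (hbal'' : ∀ s ∈ Finset.Icc 1 z,
      |cntIco X (a + ((z : ℝ) + (s : ℝ) - 1) / (z * L)) (a + ((z : ℝ) + (s : ℝ)) / (z * L)) -
          cntIco X (a + 1 / L) (a + 2 / L) / z| < δ * M / (z * L))
    (hdiff : cntIco X a (a + 1 / L) - cntIco X (a + 1 / L) (a + 2 / L) ≥ 3 * δ * M / L) :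
    ∃ s ∈ Finset.Icc 1 z,
      |cntIco X (a + ((z : ℝ) - 2 + (s : ℝ)) / (z * L)) (a + ((z : ℝ) - 1 + (s : ℝ)) / (z * L)) -
          cntIco X (a + ((z : ℝ) - 1) / (z * L)) (a + ((z : ℝ) - 1) / (z * L) + 1 / L) / z|
        > δ * M / (z * L) :=
  stmt15_general z M hz δ a L hL X hbal' hbal'' hdiff
end
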